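/- Let g be a finite simple graph, k a natural number, S ⊆ V(g), and let v_1, v_2, …, v_t be an enumeration of V(g)\S in non-decreasing order of |N̄_S(·)|. Then for every k-defective clique C of g with S ⊆ C ⊆ V(g), the first |C\S| terms satisfy ∑_{j=1}^{|C\S|} |N̄_S(v_j)| ≤ k − |Ē(S)|. Consequently |C| ≤ |S| + i*, where i* is the largest index i such that ∑_{j=1}^{i} |N̄_S(v_j)| ≤ k − |Ē(S)| (upper bound UB3). -/

import Mathlib

/-!
Each vertex `u ∈ C \ S` and each of its non-neighbours `w ∈ S` give the non-edge `s(u, w)` of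
`C`; these are pairwise distinct and none of them lies in `Ē(S)`, so
`|Ē(S)| + ∑_{u ∈ C \ S} |N̄_S(u)| ≤ |Ē(C)| ≤ k`. Since the enumeration is sorted, the first
`|C \ S|` terms sum to at most the terms indexed by `C \ S`. Hence `|C \ S|` is one of the indices
in the definition of `i*`, and `|C| = |S| + |C \ S| ≤ |S| + i*`.
-/

open Finset

variable {V : Type*} [Fintype V] [DecidableEq V]

/-- The set of non-edges of `S`: unordered pairs of distinct vertices of `S`
that are not adjacent in `G`. -/
def nonEdges (G : SimpleGraph V) [DecidableRel G.Adj] (S : Finset V) : Finset (Sym2 V) :=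
  ((S ×ˢ S).filter fun p => p.1 ≠ p.2 ∧ ¬ G.Adj p.1 p.2).image fun p => s(p.1, p.2)

/-- The set of non-neighbors of `u` among `S \ {u}`. -/
def nonNbrs (G : SimpleGraph V) [DecidableRel G.Adj] (S : Finset V) (u : V) : Finset V :=
  (S.erase u).filter fun w => ¬ G.Adj u w

lemma Fin.val_le_val_of_strictMono {m t : ℕ} {e : Fin m → Fin t} (he : StrictMono e)
    (i : Fin m) : (i : ℕ) ≤ e i := by
  simpa using card_le_card_of_injOn e (s := Iio i) (t := Iio (e i))
    (fun j hj => by simpa using he (by simpa using hj)) he.injective.injOn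

lemma Finset.sum_filter_val_lt_card_le_sum_of_monotone {M : Type*} [AddCommMonoid M]
    [PartialOrder M] [IsOrderedAddMonoid M] {t : ℕ} {f : Fin t → M} (hf : Monotone f)
    (J : Finset (Fin t)) :
    ∑ j ∈ univ.filter (fun j : Fin t => (j : ℕ) < #J), f j ≤ ∑ j ∈ J, f j := by
  have hJ : #J ≤ t := J.card_le_univ.trans_eq (Fintype.card_fin t)
  have hprefix : univ.filter (fun j : Fin t => (j : ℕ) < #J) = univ.map (Fin.castLEEmb hJ) := by
    ext j
    simpa using ⟨fun h => ⟨⟨j, h⟩, rfl⟩, by rintro ⟨a, rfl⟩; exact a.isLt⟩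
  conv_rhs => rw [← map_orderEmbOfFin_univ J rfl]
  rw [hprefix, sum_map, sum_map]
  exact sum_le_sum fun i _ => hf (Fin.val_le_val_of_strictMono (J.orderEmbOfFin rfl).strictMono i)

omit [Fintype V] in
lemma mem_nonEdges {G : SimpleGraph V} [DecidableRel G.Adj] {S : Finset V} {a b : V} :
    s(a, b) ∈ nonEdges G S ↔ a ∈ S ∧ b ∈ S ∧ a ≠ b ∧ ¬ G.Adj a b := by
  simp only [nonEdges, mem_image, mem_filter, mem_product, Prod.exists, Sym2.eq_iff]
  constructor
  · rintro ⟨x, y, ⟨⟨hx, hy⟩, hne, hadj⟩, (⟨rfl, rfl⟩ | ⟨rfl, rfl⟩)⟩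
    · exact ⟨hx, hy, hne, hadj⟩
    · exact ⟨hy, hx, fun h => hne h.symm, fun h => hadj h.symm⟩
  · rintro ⟨ha, hb, hne, hadj⟩
    exact ⟨a, b, ⟨⟨ha, hb⟩, hne, hadj⟩, Or.inl ⟨rfl, rfl⟩⟩

omit [Fintype V] in
lemma mem_nonNbrs {G : SimpleGraph V} [DecidableRel G.Adj] {S : Finset V} {u w : V} :
    w ∈ nonNbrs G S u ↔ w ∈ S ∧ w ≠ u ∧ ¬ G.Adj u w := by
  simp only [nonNbrs, mem_filter, mem_erase]
  tauto

omit [Fintype V] in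
lemma nonEdges_mono (G : SimpleGraph V) [DecidableRel G.Adj] {S C : Finset V} (hSC : S ⊆ C) :
    nonEdges G S ⊆ nonEdges G C :=
  image_subset_image (filter_subset_filter _ (product_subset_product hSC hSC))

omit [Fintype V] in
lemma sum_card_nonNbrs_le_card_nonEdges_sdiff (G : SimpleGraph V) [DecidableRel G.Adj]
    {S C : Finset V} (hSC : S ⊆ C) :
    ∑ u ∈ C \ S, #(nonNbrs G S u) ≤ #(nonEdges G C \ nonEdges G S) := by
  rw [← card_sigma]
  refine card_le_card_of_injOn (fun p => s(p.1, p.2)) ?_ ?_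
  · rintro ⟨u, w⟩ hp
    simp only [mem_coe, mem_sigma, mem_sdiff, mem_nonNbrs] at hp
    obtain ⟨⟨huC, huS⟩, hwS, hwu, hadj⟩ := hp
    simp only [mem_coe, mem_sdiff, mem_nonEdges]
    exact ⟨⟨huC, hSC hwS, hwu.symm, hadj⟩, fun h => huS h.1⟩
  · rintro ⟨u, w⟩ hp ⟨u', w'⟩ hp' h
    simp only [mem_coe, mem_sigma, mem_sdiff, mem_nonNbrs] at hp hp'
    rcases Sym2.eq_iff.mp h with ⟨rfl, rfl⟩ | ⟨rfl, -⟩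
    · rfl
    · exact absurd hp'.2.1 hp.1.2

omit [Fintype V] in
lemma card_nonEdges_add_sum_card_nonNbrs_le (G : SimpleGraph V) [DecidableRel G.Adj]
    {S C : Finset V} (hSC : S ⊆ C) :
    #(nonEdges G S) + ∑ u ∈ C \ S, #(nonNbrs G S u) ≤ #(nonEdges G C) := by
  have hcross := sum_card_nonNbrs_le_card_nonEdges_sdiff G hSC
  rw [card_sdiff_of_subset (nonEdges_mono G hSC)] at hcross
  have hS := card_le_card (nonEdges_mono G hSC)
  omega

/-- Upper bound UB3: let `v 0, v 1, …, v (t-1)` enumerate `V(g) \ S` in non-decreasing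
order of `|N̄_S(·)|`. Then every `k`-defective clique `C` with `S ⊆ C` satisfies
`∑_{j < |C \ S|} |N̄_S(v j)| ≤ k − |Ē(S)|`; consequently `|C| ≤ |S| + i*` where `i*` is
the largest `i ≤ t` whose prefix sum is at most `k − |Ē(S)|`. -/
theorem ub3 (G : SimpleGraph V) [DecidableRel G.Adj] (k : ℕ) (S : Finset V)
    {t : ℕ} (v : Fin t → V) (hinj : Function.Injective v)
    (himg : Finset.image v Finset.univ = Finset.univ \ S)
    (hmono : ∀ j₁ j₂ : Fin t, j₁ ≤ j₂ →
      (nonNbrs G S (v j₁)).card ≤ (nonNbrs G S (v j₂)).card)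
    (istar : ℕ)
    (histar : IsGreatest {i : ℕ | i ≤ t ∧
      ∑ j ∈ Finset.univ.filter (fun j : Fin t => (j : ℕ) < i),
        ((nonNbrs G S (v j)).card : ℤ) ≤ (k : ℤ) - ((nonEdges G S).card : ℤ)} istar)
    (C : Finset V) (hSC : S ⊆ C) (hC : (nonEdges G C).card ≤ k) :
    (∑ j ∈ Finset.univ.filter (fun j : Fin t => (j : ℕ) < (C \ S).card),
        ((nonNbrs G S (v j)).card : ℤ) ≤ (k : ℤ) - ((nonEdges G S).card : ℤ))
      ∧ C.card ≤ S.card + istar := by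
  have hCS : C \ S ⊆ univ.image v := himg ▸ sdiff_subset_sdiff (subset_univ C) subset_rfl
  have hrange : ∀ u ∈ C \ S, u ∈ Set.range v := fun u hu => by simpa using hCS hu
  set J := (C \ S).preimage v hinj.injOn
  have hJ : #J = #(C \ S) := by rw [card_preimage, filter_true_of_mem hrange]
  have hsum : ∑ j ∈ J, #(nonNbrs G S (v j)) = ∑ u ∈ C \ S, #(nonNbrs G S u) :=
    sum_preimage v _ hinj.injOn (fun u => #(nonNbrs G S u)) fun u hu h => absurd (hrange u hu) h
  have hprefix : #(nonEdges G S) +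
      ∑ j ∈ univ.filter (fun j : Fin t => (j : ℕ) < #(C \ S)), #(nonNbrs G S (v j)) ≤ k := by
    rw [← hJ]
    calc _ ≤ #(nonEdges G S) + ∑ j ∈ J, #(nonNbrs G S (v j)) :=
          Nat.add_le_add_left (sum_filter_val_lt_card_le_sum_of_monotone (hmono · ·) J) _
      _ ≤ #(nonEdges G C) := hsum ▸ card_nonEdges_add_sum_card_nonNbrs_le G hSC
      _ ≤ k := hC
  have hfirst : ∑ j ∈ univ.filter (fun j : Fin t => (j : ℕ) < #(C \ S)),
      (#(nonNbrs G S (v j)) : ℤ) ≤ k - #(nonEdges G S) :=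
    le_sub_iff_add_le'.mpr (by exact_mod_cast hprefix)
  have hmt : #(C \ S) ≤ t := (card_le_card hCS).trans (card_image_le.trans_eq (by simp))
  refine ⟨hfirst, ?_⟩
  rw [← card_sdiff_add_card_eq_card hSC, add_comm]
  exact add_le_add_right (histar.2 ⟨hmt, hfirst⟩) _
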